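/- Let n ≥ 5. In B̃_n, writing g_b := b^{−1} g b for conjugation, one has (s_1)_{x_i} = s_1 for every generator x_i with i ≠ 2, and (s_1)_{x_2} = s_1 u_2^{−1}. -/

import Mathlib

open scoped commutatorElement

/-- The defining relators of the Artin braid group `B_n` on `n` strands, with
generators `x_1, …, x_{n-1}` indexed by `Fin (n-1)` (index `i` corresponds to `x_{i+1}`). -/
def braidRels (n : ℕ) : Set (FreeGroup (Fin (n - 1))) :=
  {r | (∃ i j : Fin (n - 1), (i : ℕ) + 1 < (j : ℕ) ∧
          r = FreeGroup.of i * FreeGroup.of j * (FreeGroup.of i)⁻¹ * (FreeGroup.of j)⁻¹) ∨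
       (∃ i j : Fin (n - 1), (i : ℕ) + 1 = (j : ℕ) ∧
          r = FreeGroup.of i * FreeGroup.of j * FreeGroup.of i *
              (FreeGroup.of j * FreeGroup.of i * FreeGroup.of j)⁻¹)}

/-- The relators of `B̃_n`: the braid relators together with the commutator
`[x_2, (x_1 x_3) x_2 (x_1 x_3)⁻¹]` (in the `0`-indexed notation: `[x 1, (x 0 * x 2) * x 1 * (x 0 * x 2)⁻¹]`). -/
def tildeRels (n : ℕ) (hn : 5 ≤ n) : Set (FreeGroup (Fin (n - 1))) :=
  insert
    ⁅FreeGroup.of (⟨1, by omega⟩ : Fin (n - 1)),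
      (FreeGroup.of (⟨0, by omega⟩ : Fin (n - 1)) * FreeGroup.of (⟨2, by omega⟩ : Fin (n - 1))) *
        FreeGroup.of (⟨1, by omega⟩ : Fin (n - 1)) *
        ((FreeGroup.of (⟨0, by omega⟩ : Fin (n - 1)) *
          FreeGroup.of (⟨2, by omega⟩ : Fin (n - 1))))⁻¹⁆
    (braidRels n)

/-- The group `B̃_n`. -/
abbrev Btilde (n : ℕ) (hn : 5 ≤ n) : Type := PresentedGroup (tildeRels n hn)

/-- The image `x_i` of the `i`-th generator in `B̃_n` (here `i : Fin (n-1)` corresponds to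
the generator `x_{i+1}` of the paper). -/
def xg (n : ℕ) (hn : 5 ≤ n) (i : Fin (n - 1)) : Btilde n hn := PresentedGroup.of i

/-- `s_1 = x_1²`. -/
def s1 (n : ℕ) (hn : 5 ≤ n) : Btilde n hn := xg n hn ⟨0, by omega⟩ ^ 2

/-- `μ = [x_1², x_2²]`. -/
def mu (n : ℕ) (hn : 5 ≤ n) : Btilde n hn :=
  ⁅xg n hn ⟨0, by omega⟩ ^ 2, xg n hn ⟨1, by omega⟩ ^ 2⁆

/-- `u_i = [x_i⁻¹, x_{i+1}²]` for `1 ≤ i ≤ n-2`, and `u_{n-1} = [x_{n-2}², x_{n-1}]`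
(in `0`-indexed notation: `uu i = ⁅(x i)⁻¹, (x (i+1))²⁆` for `i + 1 < n - 1`, and
`uu ⟨n-2,_⟩ = ⁅(x ⟨n-3,_⟩)², x ⟨n-2,_⟩⁆`). -/
def uu (n : ℕ) (hn : 5 ≤ n) (i : Fin (n - 1)) : Btilde n hn :=
  if h : (i : ℕ) + 1 < n - 1 then
    ⁅(xg n hn i)⁻¹, xg n hn ⟨(i : ℕ) + 1, h⟩ ^ 2⁆
  else
    ⁅xg n hn ⟨(i : ℕ) - 1, by have := i.isLt; omega⟩ ^ 2, xg n hn i⁆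

/-!
Write `a, b, c` for `x₁, x₂, x₃`. The braid relations give `(b · ac)² = (ac · b)²`, i.e.
`(ac)⁻¹ b (ac) = b · (ac) b (ac)⁻¹ · b⁻¹`. The defining relation of `B̃_n` says that `b` commutes
with `(ac) b (ac)⁻¹`, so conjugation by `ac` and by `(ac)⁻¹` agree on `b`: `b` commutes with
`(ac)² = a²c²`. Hence `b⁻¹ a² b = a² · c² b⁻¹ c⁻² b = s₁ u₂⁻¹`. Every other generator commutes
with `x₁`, hence with `s₁`.
-/

section BraidRelations

variable {G : Type*} [Group G] {a b c d : G}

theorem mul_sq_eq_of_braid (hac : Commute a c) (hab : a * b * a = b * a * b)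
    (hbc : b * c * b = c * b * c) :
    (b * (a * c)) ^ 2 = (a * c * b) ^ 2 := by
  rw [sq, sq]
  calc b * (a * c) * (b * (a * c)) = b * (a * c) * b * (c * a) := by rw [hac.eq]; group
    _ = b * a * (c * b * c) * a := by group
    _ = b * a * (b * c * b) * a := by rw [hbc]
    _ = b * a * b * c * (b * a) := by group
    _ = a * b * a * c * (b * a) := by rw [hab]
    _ = a * b * (a * c) * b * a := by group
    _ = a * b * (c * a) * b * a := by rw [hac.eq]
    _ = a * (b * c * (a * b * a)) := by group
    _ = a * (b * c * (b * a * b)) := by rw [hab]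
    _ = a * (b * c * b) * a * b := by group
    _ = a * (c * b * c) * a * b := by rw [hbc]
    _ = a * c * b * (c * a) * b := by group
    _ = a * c * b * (a * c * b) := by rw [hac.eq]; group

theorem commute_sq_of_commute_conj (hbd : (b * d) ^ 2 = (d * b) ^ 2)
    (h : Commute b (d * b * d⁻¹)) : Commute b (d ^ 2) :=
  Eq.symm <| calc d ^ 2 * b = d * ((d * b * d⁻¹) * b) * b⁻¹ * d := by rw [sq]; group
    _ = d * (b * (d * b * d⁻¹)) * b⁻¹ * d := by rw [h.eq]
    _ = (d * b) ^ 2 * d⁻¹ * b⁻¹ * d := by rw [sq]; group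
    _ = (b * d) ^ 2 * d⁻¹ * b⁻¹ * d := by rw [hbd]
    _ = b * d ^ 2 := by rw [sq, sq]; group

theorem inv_mul_sq_mul_eq (hac : Commute a c) (hab : a * b * a = b * a * b)
    (hbc : b * c * b = c * b * c) (h : Commute b (a * c * b * (a * c)⁻¹)) :
    b⁻¹ * a ^ 2 * b = a ^ 2 * ⁅b⁻¹, c ^ 2⁆⁻¹ := by
  have hsq : Commute b (a ^ 2 * c ^ 2) := by
    rw [← hac.mul_pow]
    exact commute_sq_of_commute_conj (mul_sq_eq_of_braid hac hab hbc) h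
  calc b⁻¹ * a ^ 2 * b = b⁻¹ * (a ^ 2 * c ^ 2) * (c ^ 2)⁻¹ * b := by group
    _ = a ^ 2 * c ^ 2 * b⁻¹ * (c ^ 2)⁻¹ * b := by rw [hsq.inv_left.eq]
    _ = a ^ 2 * ⁅b⁻¹, c ^ 2⁆⁻¹ := by rw [commutatorElement_def]; group

end BraidRelations

section Btilde

variable {n : ℕ} {hn : 5 ≤ n}

theorem xg_commute {i j : Fin (n - 1)} (hij : (i : ℕ) + 1 < j) :
    Commute (xg n hn i) (xg n hn j) :=
  commutatorElement_eq_one_iff_commute.mp <|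
    PresentedGroup.one_of_mem (Set.mem_insert_of_mem _ (Or.inl ⟨i, j, hij, rfl⟩))

theorem xg_braid {i j : Fin (n - 1)} (hij : (i : ℕ) + 1 = j) :
    xg n hn i * xg n hn j * xg n hn i = xg n hn j * xg n hn i * xg n hn j :=
  PresentedGroup.mk_eq_mk_of_mul_inv_mem (Set.mem_insert_of_mem _ (Or.inr ⟨i, j, hij, rfl⟩))

theorem xg_commute_conj :
    Commute (xg n hn ⟨1, by omega⟩)
      (xg n hn ⟨0, by omega⟩ * xg n hn ⟨2, by omega⟩ * xg n hn ⟨1, by omega⟩ *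
        (xg n hn ⟨0, by omega⟩ * xg n hn ⟨2, by omega⟩)⁻¹) :=
  commutatorElement_eq_one_iff_commute.mp <| PresentedGroup.one_of_mem (Set.mem_insert _ _)

theorem uu_one :
    uu n hn ⟨1, by omega⟩ = ⁅(xg n hn ⟨1, by omega⟩)⁻¹, xg n hn ⟨2, by omega⟩ ^ 2⁆ :=
  dif_pos (by simp only; omega)

end Btilde

/-- For `n ≥ 5`, in `B̃_n` (with `g_b := b⁻¹ g b`):
`(s_1)_{x_i} = s_1` for `i ≠ 2` and `(s_1)_{x_2} = s_1 u_2⁻¹`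
(in `0`-indexed notation, `x_2` is `xg ⟨1,_⟩` and `u_2` is `uu ⟨1,_⟩`). -/
theorem stmt9 (n : ℕ) (hn : 5 ≤ n) (i : Fin (n - 1)) :
    ((i : ℕ) ≠ 1 → (xg n hn i)⁻¹ * s1 n hn * xg n hn i = s1 n hn) ∧
    ((i : ℕ) = 1 →
      (xg n hn i)⁻¹ * s1 n hn * xg n hn i = s1 n hn * (uu n hn ⟨1, by omega⟩)⁻¹) := by
  obtain ⟨k, hk⟩ := i
  refine ⟨fun hk1 => ?_, fun hk1 => ?_⟩
  · have hcomm : Commute (xg n hn ⟨0, by omega⟩) (xg n hn ⟨k, hk⟩) := by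
      rcases k with _ | k
      · exact Commute.refl _
      · exact xg_commute (by simp only at hk1 ⊢; omega)
    exact (hcomm.pow_left 2).symm.inv_mul_cancel
  · obtain rfl : k = 1 := hk1
    rw [uu_one]
    exact inv_mul_sq_mul_eq (xg_commute (by simp only; omega)) (xg_braid rfl) (xg_braid rfl)
      xg_commute_conj
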